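/- arXiv:2005.03108 — 2 statements merged into one kernel-verified Lean document; each statement's English description precedes it below -/
import Mathlib

section
/- Let β : ℝ² → ℝ be convex and superlinear, and α = β* its Fenchel conjugate. Then for any h₀ ∈ ℝ² and any real c ≥ min α, there exist λ₀ ∈ ℝ and a subgradient p₀ ∈ ∂β(λ₀h₀) with α(p₀) = c, provided h₀ ≠ 0. -/
/-!
Restrict `β` to the line `ℝ h₀`, giving a convex superlinear `φ : ℝ → ℝ`. Its conjugate `φ*` is
finite and convex, hence continuous; it is at most `-φ 0 = -β 0 ≤ min α ≤ c` at a subgradient of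
`φ` at `0`, and it tends to `+∞`. By the intermediate value theorem `φ* s = c` for some `s`, and
superlinearity gives a maximiser `t` of `μ ↦ s μ - φ μ`, so that `s ∈ ∂φ(t)`. Separating the strict
epigraph of `β` from the line `{(t h₀ + μ h₀, β (t h₀) + μ s)}` lifts `s` to some
`p ∈ ∂β(t h₀)` with `⟪p, h₀⟫ = s`, and then `α p = ⟪p, t h₀⟫ - β (t h₀) = s t - φ t = c`.
-/

open RealInnerProductSpace

/-- The plane `ℝ² ≅ H₁(T²,ℝ)`. -/
abbrev V2 : Type := EuclideanSpace ℝ (Fin 2)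

/-- The subdifferential of a function `β : ℝ² → ℝ` at a point `h`. -/
def subdiff (β : V2 → ℝ) (h : V2) : Set V2 :=
  {p : V2 | ∀ h' : V2, β h + ⟪p, h' - h⟫ ≤ β h'}

open Set Filter
open scoped Pointwise

def Superlinear {E : Type*} [Norm E] (f : E → ℝ) : Prop :=
  ∀ C : ℝ, ∃ R : ℝ, ∀ x : E, R ≤ ‖x‖ → C * ‖x‖ ≤ f x

theorem Superlinear.comp_smul_right {F : Type*} [NormedAddCommGroup F] [NormedSpace ℝ F]
    {f : F → ℝ} (hf : Superlinear f) {v : F} (hv : v ≠ 0) :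
    Superlinear fun t : ℝ => f (t • v) := by
  intro C
  have hv' : 0 < ‖v‖ := norm_pos_iff.2 hv
  obtain ⟨R, hR⟩ := hf (C / ‖v‖)
  refine ⟨R / ‖v‖, fun t ht => ?_⟩
  have := hR (t • v) (by rwa [norm_smul, ← div_le_iff₀ hv'])
  rw [norm_smul] at this
  convert this using 1
  field_simp

section InnerProductSpace

variable {E : Type*} [NormedAddCommGroup E] [InnerProductSpace ℝ E] {f : E → ℝ}

theorem Superlinear.tendsto_sub_inner [ProperSpace E] (hf : Superlinear f) (p : E) :
    Tendsto (fun x => f x - ⟪p, x⟫) (cocompact E) atTop := by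
  obtain ⟨R, hR⟩ := hf (‖p‖ + 1)
  refine tendsto_atTop_mono' _ ?_ tendsto_norm_cocompact_atTop
  filter_upwards [tendsto_norm_cocompact_atTop.eventually_ge_atTop R] with x hx
  nlinarith [hR x hx, real_inner_le_norm p x]

theorem Superlinear.exists_forall_inner_sub_le [ProperSpace E] (hf : Superlinear f)
    (hfc : Continuous f) (p : E) : ∃ x, ∀ y, ⟪p, y⟫ - f y ≤ ⟪p, x⟫ - f x := by
  obtain ⟨x, hx⟩ := Continuous.exists_forall_le (f := fun x => f x - ⟪p, x⟫) (by fun_prop)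
    (hf.tendsto_sub_inner p)
  exact ⟨x, fun y => by linarith [hx y]⟩

/-- Takes the junk value `0` where the supremum is infinite. -/
noncomputable def fenchelConjugate (f : E → ℝ) (p : E) : ℝ := ⨆ x, ⟪p, x⟫ - f x

theorem fenchelConjugate_eq_of_forall_le {p x : E} (h : ∀ y, ⟪p, y⟫ - f y ≤ ⟪p, x⟫ - f x) :
    fenchelConjugate f p = ⟪p, x⟫ - f x :=
  le_antisymm (ciSup_le h) (le_ciSup ⟨_, forall_mem_range.2 h⟩ x)

theorem convexOn_fenchelConjugate (hf : ∀ p, BddAbove (range fun x => ⟪p, x⟫ - f x)) :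
    ConvexOn ℝ univ (fenchelConjugate f) := by
  refine ⟨convex_univ, fun p _ q _ a b ha hb hab => ciSup_le fun x => ?_⟩
  have hp := le_ciSup (hf p) x
  have hq := le_ciSup (hf q) x
  calc ⟪a • p + b • q, x⟫ - f x = a * (⟪p, x⟫ - f x) + b * (⟪q, x⟫ - f x) := by
        rw [inner_add_left, real_inner_smul_left, real_inner_smul_left]
        linear_combination (f x) * hab
    _ ≤ a • fenchelConjugate f p + b • fenchelConjugate f q := by
        simp only [smul_eq_mul]; gcongr <;> assumption

end InnerProductSpace

theorem ConvexOn.exists_forall_add_mul_sub_le {f : ℝ → ℝ} (hf : ConvexOn ℝ univ f) (x : ℝ) :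
    ∃ s, ∀ y, f x + s * (y - x) ≤ f y := by
  refine ⟨derivWithin f (Ioi x) x, fun y => ?_⟩
  have hx : x ∈ interior univ := by simp
  rcases lt_trichotomy y x with hyx | rfl | hxy
  · have hleft := hf.slope_le_leftDeriv_of_mem_interior (mem_univ y) hx hyx
    rw [slope_def_field, div_le_iff₀ (sub_pos.2 hyx)] at hleft
    nlinarith [hf.leftDeriv_le_rightDeriv_of_mem_interior hx]
  · simp
  · have hright := hf.rightDeriv_le_slope_of_mem_interior hx (mem_univ y) hxy
    rw [slope_def_field, le_div_iff₀ (sub_pos.2 hxy)] at hright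
    linarith

theorem Superlinear.exists_subgradient_mul_sub_eq {φ : ℝ → ℝ} (hsuper : Superlinear φ)
    (hφ : ConvexOn ℝ univ φ) {c : ℝ} (hc : -φ 0 ≤ c) :
    ∃ t s : ℝ, (∀ μ, φ t + μ * s ≤ φ (t + μ)) ∧ s * t - φ t = c := by
  have hmax := hsuper.exists_forall_inner_sub_le (continuousOn_univ.1 (hφ.continuousOn isOpen_univ))
  have hconj : Continuous (fenchelConjugate φ) := continuousOn_univ.1 <|
    (convexOn_fenchelConjugate fun s => (hmax s).elim fun _ ht => ⟨_, forall_mem_range.2 ht⟩)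
      |>.continuousOn isOpen_univ
  obtain ⟨s₀, hs₀⟩ := hφ.exists_forall_add_mul_sub_le 0
  have hlow : fenchelConjugate φ s₀ ≤ c :=
    (ciSup_le fun y => by rw [Real.inner_apply]; linarith [hs₀ y]).trans hc
  have hhigh : c ≤ fenchelConjugate φ (c + φ 1) := by
    obtain ⟨t, ht⟩ := hmax (c + φ 1)
    rw [fenchelConjugate_eq_of_forall_le ht]
    simpa using ht 1
  obtain ⟨s, hs⟩ := intermediate_value_univ s₀ (c + φ 1) hconj ⟨hlow, hhigh⟩
  obtain ⟨t, ht⟩ := hmax s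
  refine ⟨t, s, fun μ => ?_, ?_⟩
  · have := ht (t + μ)
    simp only [Real.inner_apply] at this
    linarith
  · rw [← hs, fenchelConjugate_eq_of_forall_le ht, Real.inner_apply, mul_comm]

section Separation

variable {E : Type*} [NormedAddCommGroup E] [NormedSpace ℝ E] {f : E → ℝ}

theorem ConvexOn.exists_dual_separating_strict_epigraph_line (hf : ConvexOn ℝ univ f) (hfc : Continuous f)
    {x v : E} {s : ℝ} (hs : ∀ μ : ℝ, f x + μ * s ≤ f (x + μ • v)) :
    ∃ g : StrongDual ℝ (E × ℝ), ∀ y τ μ, f y < τ → g (y, τ) < g (x, f x) + μ * g (v, s) := by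
  set S : Set (E × ℝ) := {q | q.1 ∈ univ ∧ f q.1 < q.2}
  set L : Set (E × ℝ) := range fun μ : ℝ => (x, f x) + μ • (v, s)
  have hS : IsOpen S := by
    simpa [S] using isOpen_lt (hfc.comp continuous_fst) continuous_snd
  have hL : Convex ℝ L := by
    rintro _ ⟨μ, rfl⟩ _ ⟨ν, rfl⟩ a b - - hab
    exact ⟨a * μ + b * ν, by linear_combination (norm := module) (-hab) • ((x, f x) : E × ℝ)⟩
  have hSL : (0 : E × ℝ) ∉ S - L := by
    rintro ⟨q, ⟨-, hq⟩, _, ⟨μ, rfl⟩, hqμ⟩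
    rw [sub_eq_zero] at hqμ
    subst hqμ
    exact (hs μ).not_gt (by simpa [mul_comm] using hq)
  obtain ⟨g, hg⟩ :=
    geometric_hahn_banach_open_point (hf.convex_strict_epigraph.sub hL) hS.sub_right hSL
  refine ⟨g, fun y τ μ hτ => ?_⟩
  have := hg _ (sub_mem_sub (show (y, τ) ∈ S from ⟨mem_univ _, hτ⟩) ⟨μ, rfl⟩)
  rwa [map_zero, map_sub, sub_neg, map_add, map_smul, smul_eq_mul] at this

theorem ConvexOn.exists_subgradient_of_line (hf : ConvexOn ℝ univ f) (hfc : Continuous f)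
    {x v : E} {s : ℝ} (hs : ∀ μ : ℝ, f x + μ * s ≤ f (x + μ • v)) :
    ∃ ℓ : StrongDual ℝ E, ℓ v = s ∧ ∀ y, f x + ℓ (y - x) ≤ f y := by
  obtain ⟨g, hsep⟩ := hf.exists_dual_separating_strict_epigraph_line hfc hs
  set ℓ : StrongDual ℝ E := g.comp (.inl ℝ E ℝ)
  set r : ℝ := g (0, 1)
  have hg_apply (z : E) (t : ℝ) : g (z, t) = ℓ z + t * r := by
    rw [← smul_eq_mul, ← map_smul, ContinuousLinearMap.comp_apply, ContinuousLinearMap.inl_apply,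
      ← map_add]
    simp
  have hx_above (μ : ℝ) : g (x, f x + 1) < g (x, f x) + μ * g (v, s) :=
    hsep x _ μ (lt_add_one _)
  have hg_line : g (v, s) = 0 := by
    by_contra hne
    have := hx_above ((g (x, f x + 1) - g (x, f x)) / g (v, s))
    rw [div_mul_cancel₀ _ hne] at this
    linarith
  have hr : 0 < -r := by
    have := hx_above 0
    rw [hg_apply x (f x + 1), hg_apply x (f x)] at this
    linarith
  refine ⟨(-r)⁻¹ • ℓ, ?_, fun y => ?_⟩
  · rw [hg_apply] at hg_line
    rw [smul_apply, smul_eq_mul, inv_mul_eq_iff_eq_mul₀ hr.ne']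
    linarith
  · refine le_of_forall_gt_imp_ge_of_dense fun τ hτ => ?_
    have := hsep y τ 0 hτ
    rw [hg_apply y, hg_apply x] at this
    have : (-r)⁻¹ * ℓ (y - x) ≤ τ - f x := by
      rw [inv_mul_le_iff₀ hr, map_sub]
      linarith
    rw [smul_apply, smul_eq_mul]
    linarith

end Separation

theorem exists_mem_subdiff_inner_eq {β : V2 → ℝ} (hβ : ConvexOn ℝ univ β) {x v : V2} {s : ℝ}
    (hs : ∀ μ : ℝ, β x + μ * s ≤ β (x + μ • v)) : ∃ p ∈ subdiff β x, ⟪p, v⟫ = s := by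
  obtain ⟨ℓ, hℓv, hℓ⟩ :=
    hβ.exists_subgradient_of_line (continuousOn_univ.1 (hβ.continuousOn isOpen_univ)) hs
  refine ⟨(InnerProductSpace.toDual ℝ V2).symm ℓ, fun y => ?_, ?_⟩ <;>
    rw [InnerProductSpace.toDual_symm_apply]
  exacts [hℓ y, hℓv]

theorem conj_eq_inner_sub_of_mem_subdiff {β α : V2 → ℝ}
    (hα : ∀ p : V2, IsLUB {r : ℝ | ∃ h : V2, r = ⟪p, h⟫ - β h} (α p))
    {h p : V2} (hp : p ∈ subdiff β h) : α p = ⟪p, h⟫ - β h := by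
  refine (hα p).unique (IsGreatest.isLUB ⟨⟨h, rfl⟩, ?_⟩)
  rintro _ ⟨h', rfl⟩
  linarith [hp h', inner_sub_right (𝕜 := ℝ) p h' h]

/-- Let `β : ℝ² → ℝ` be convex and superlinear and `α = β*` its Fenchel conjugate.
Then for any nonzero `h₀ ∈ ℝ²` and any real `c ≥ min α`, there exist `lam₀ ∈ ℝ` and a
subgradient `p₀ ∈ ∂β(lam₀ h₀)` with `α(p₀) = c`. -/
theorem exists_subgradient_on_line_with_alpha_eq
    (β : V2 → ℝ)
    (hconv : ConvexOn ℝ Set.univ β)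
    (hsuper : ∀ C : ℝ, ∃ R : ℝ, ∀ h : V2, R ≤ ‖h‖ → C * ‖h‖ ≤ β h)
    (α : V2 → ℝ)
    (hα : ∀ p : V2, IsLUB {r : ℝ | ∃ h : V2, r = ⟪p, h⟫ - β h} (α p))
    (h₀ : V2) (hh₀ : h₀ ≠ 0)
    (c : ℝ) (hc : sInf (Set.range α) ≤ c) :
    ∃ (lam₀ : ℝ) (p₀ : V2), p₀ ∈ subdiff β (lam₀ • h₀) ∧ α p₀ = c := by
  have hmin : -β 0 ≤ sInf (range α) :=
    le_csInf (range_nonempty α) (forall_mem_range.2 fun p => (hα p).1 ⟨0, by simp⟩)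
  obtain ⟨t, s, hts, hst⟩ :=
    Superlinear.exists_subgradient_mul_sub_eq (φ := fun t => β (t • h₀))
      (Superlinear.comp_smul_right hsuper hh₀)
      (hconv.comp_linearMap (LinearMap.toSpanSingleton ℝ V2 h₀))
      (c := c) (by simpa using hmin.trans hc)
  obtain ⟨p, hp, hps⟩ := exists_mem_subdiff_inner_eq hconv (x := t • h₀) (v := h₀)
    fun μ => by simpa [add_smul] using hts μ
  refine ⟨t, p, hp, ?_⟩
  rw [conj_eq_inner_sub_of_mem_subdiff hα hp, real_inner_smul_right, hps, ← hst, mul_comm]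
end

section
/- Let β : ℝ² → ℝ be convex and superlinear and fix a nonzero vector h₀. Then the set S(h₀) = ⋃_{λ∈ℝ} ∂β(λh₀) of all subgradients at points of the line ℝh₀ is an unbounded connected subset of ℝ², and the restriction of α = β* to S(h₀) is unbounded above. -/
open RealInnerProductSpace

/-!
A convex `β` on `ℝ²` is continuous, so by Hahn–Banach each `∂β(x)` is a nonempty convex set;
the graph of `∂β` is closed and `∂β` is bounded on bounded sets, hence `∂β` is upper
hemicontinuous. Given a separation of `S(h₀)`, each connected `∂β(λh₀)` lies in one piece, and
upper hemicontinuity makes the parameters `λ` sent to either piece an open partition of `ℝ`.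
For `p ∈ ∂β(x)` we have `β x - β 0 ≤ ⟪p, x⟫ ≤ ‖p‖ ‖x‖`, so superlinearity along `ℝh₀` yields
subgradients of arbitrarily large norm, and testing the supremum defining `α p` at `p / ‖p‖`
gives `α p ≥ ‖p‖ - max_{‖u‖ ≤ 1} β u`.
-/

open Set Filter Topology

theorem ConvexOn.continuous_of_univ {E : Type*} [NormedAddCommGroup E] [NormedSpace ℝ E]
    [FiniteDimensional ℝ E] {f : E → ℝ} (hf : ConvexOn ℝ univ f) : Continuous f :=
  continuousOn_univ.mp (hf.continuousOn isOpen_univ)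

theorem isConnected_iUnion_of_upperHemicontinuous {X Y : Type*} [TopologicalSpace X]
    [ConnectedSpace X] [TopologicalSpace Y] {F : X → Set Y} (hF : UpperHemicontinuous F)
    (hne : ∀ x, (F x).Nonempty) (hpre : ∀ x, IsPreconnected (F x)) :
    IsConnected (⋃ x, F x) := by
  refine ⟨?_, isPreconnected_iff_subset_of_disjoint.mpr fun u v hu hv hcover hdisj => ?_⟩
  · obtain ⟨x⟩ := ConnectedSpace.toNonempty (α := X)
    exact (hne x).mono (subset_iUnion F x)
  have hsplit (x : X) : F x ∈ Iic u ∪ Iic v :=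
    isPreconnected_iff_subset_of_disjoint.mp (hpre x) u v hu hv
      ((subset_iUnion F x).trans hcover)
      (subset_eq_empty (inter_subset_inter_left _ (subset_iUnion F x)) hdisj)
  have hsep : univ ∩ (F ⁻¹' Iic u ∩ F ⁻¹' Iic v) = ∅ := by
    refine eq_empty_of_forall_notMem fun x ⟨_, hxu, hxv⟩ => ?_
    obtain ⟨y, hy⟩ := hne x
    exact hdisj.subset ⟨mem_iUnion_of_mem x hy, hxu hy, hxv hy⟩
  have hopen := upperHemicontinuous_iff_isOpen_preimage_Iic.mp hF
  rcases isPreconnected_iff_subset_of_disjoint.mp isPreconnected_univ _ _ (hopen u hu)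
    (hopen v hv) (fun x _ => hsplit x) hsep with h | h
  · exact Or.inl (iUnion_subset fun x => h (mem_univ x))
  · exact Or.inr (iUnion_subset fun x => h (mem_univ x))

theorem real_inner_inv_norm_smul_self {E : Type*} [NormedAddCommGroup E]
    [InnerProductSpace ℝ E] (p : E) : ⟪p, ‖p‖⁻¹ • p⟫ = ‖p‖ := by
  rw [real_inner_smul_right, real_inner_self_eq_norm_sq]
  rcases eq_or_ne ‖p‖ 0 with h | h
  · simp [h]
  · field_simp

theorem norm_inv_norm_smul_self_le_one {E : Type*} [NormedAddCommGroup E]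
    [NormedSpace ℝ E] (p : E) : ‖‖p‖⁻¹ • p‖ ≤ 1 := by
  rcases eq_or_ne p 0 with rfl | h
  · simp
  · exact (norm_smul_inv_norm h).le

theorem convex_subdiff (β : V2 → ℝ) (x : V2) : Convex ℝ (subdiff β x) := by
  have : subdiff β x = ⋂ y, {p | ⟪y - x, p⟫ ≤ β y - β x} := by
    ext p; simp [subdiff, le_sub_iff_add_le', real_inner_comm]
  rw [this]
  exact convex_iInter fun y => convex_halfSpace_le (innerₛₗ ℝ (y - x)).isLinear _

section Subdifferential

variable {β : V2 → ℝ}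

theorem isClosed_setOf_mem_subdiff (hβ : ConvexOn ℝ univ β) :
    IsClosed {q : V2 × V2 | q.2 ∈ subdiff β q.1} := by
  have : {q : V2 × V2 | q.2 ∈ subdiff β q.1} = ⋂ y, {q | β q.1 + ⟪q.2, y - q.1⟫ ≤ β y} := by
    ext; simp [subdiff]
  rw [this]
  exact isClosed_iInter fun y => isClosed_le
    ((hβ.continuous_of_univ.comp continuous_fst).add
      (continuous_snd.inner (continuous_const.sub continuous_fst))) continuous_const

theorem nonempty_subdiff (hβ : ConvexOn ℝ univ β) (x₀ : V2) : (subdiff β x₀).Nonempty := by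
  have hopen : IsOpen {q : V2 × ℝ | q.1 ∈ univ ∧ β q.1 < q.2} := by
    simpa using isOpen_lt (hβ.continuous_of_univ.comp continuous_fst) continuous_snd
  obtain ⟨f, hf⟩ := geometric_hahn_banach_open_point hβ.convex_strict_epigraph hopen
    (x := (x₀, β x₀)) (by simp)
  set g : V2 →L[ℝ] ℝ := f.comp (.inl ℝ V2 ℝ)
  set c := f (0, 1)
  have hf_apply (x : V2) (t : ℝ) : f (x, t) = g x + t * c := by
    rw [show (x, t) = ((x, 0) : V2 × ℝ) + t • ((0 : V2), (1 : ℝ)) by simp, map_add, map_smul]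
    rfl
  have hsep (x : V2) (t : ℝ) (ht : β x < t) : g x + t * c < g x₀ + β x₀ * c := by
    simpa only [hf_apply] using hf (x, t) ⟨mem_univ x, ht⟩
  have hc : c < 0 := by linarith [hsep x₀ (β x₀ + 1) (by linarith)]
  -- the hyperplane `f = f (x₀, β x₀)` is not vertical, so it is the graph of an affine minorant
  have hmin (x : V2) : (-c)⁻¹ * g (x - x₀) + β x₀ ≤ β x := by
    refine le_of_forall_gt_imp_ge_of_dense fun t ht => ?_
    rw [← le_sub_iff_add_le, inv_mul_le_iff₀ (neg_pos.mpr hc), map_sub]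
    linarith [hsep x t ht]
  refine ⟨(InnerProductSpace.toDual ℝ V2).symm ((-c)⁻¹ • g), fun x => ?_⟩
  rw [InnerProductSpace.toDual_symm_apply]
  simp only [FunLike.coe_smul, Pi.smul_apply, smul_eq_mul]
  linarith [hmin x]

theorem inner_le_of_mem_subdiff {x p : V2} (hp : p ∈ subdiff β x) (u : V2) :
    ⟪p, u⟫ ≤ β (x + u) - β x := by
  have := hp (x + u)
  rw [add_sub_cancel_left] at this
  linarith

theorem exists_norm_le_of_mem_subdiff (hβ : ConvexOn ℝ univ β) (r : ℝ) :
    ∃ M, ∀ x, ‖x‖ ≤ r → ∀ p ∈ subdiff β x, ‖p‖ ≤ M := by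
  obtain ⟨M, hM⟩ := (isCompact_closedBall (0 : V2) (r + 1)).exists_bound_of_continuousOn
    hβ.continuous_of_univ.continuousOn
  have hbound {y : V2} (hy : ‖y‖ ≤ r + 1) : |β y| ≤ M := hM y (mem_closedBall_zero_iff.mpr hy)
  refine ⟨2 * M, fun x hx p hp => ?_⟩
  have hu := norm_inv_norm_smul_self_le_one p
  have hxu := hbound ((norm_add_le x _).trans (add_le_add hx hu))
  have hx' := hbound (hx.trans (le_add_of_nonneg_right zero_le_one))
  have := inner_le_of_mem_subdiff hp (‖p‖⁻¹ • p)
  rw [real_inner_inv_norm_smul_self] at this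
  linarith [le_abs_self (β (x + ‖p‖⁻¹ • p)), neg_abs_le (β x)]

theorem upperHemicontinuous_subdiff (hβ : ConvexOn ℝ univ β) :
    UpperHemicontinuous (subdiff β) := by
  refine upperHemicontinuous_iff.mpr fun x₀ => ?_
  obtain ⟨M, hM⟩ := exists_norm_le_of_mem_subdiff hβ (‖x₀‖ + 1)
  refine .of_sequences (isCompact_closedBall (0 : V2) M).isSeqCompact ?_
    fun x hx p hp p₀ hp₀ => (isClosed_setOf_mem_subdiff hβ).mem_of_tendsto
      (hx.prodMk_nhds hp₀) (Eventually.of_forall hp)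
  filter_upwards [Metric.closedBall_mem_nhds x₀ one_pos] with x hx p hp
  refine mem_closedBall_zero_iff.mpr (hM x ?_ p hp)
  linarith [norm_le_norm_add_norm_sub' x x₀, mem_closedBall_iff_norm.mp hx]

theorem exists_mem_subdiff_smul_le_norm (hβ : ConvexOn ℝ univ β)
    (hsuper : ∀ C : ℝ, ∃ R : ℝ, ∀ h : V2, R ≤ ‖h‖ → C * ‖h‖ ≤ β h) {h₀ : V2} (hh₀ : h₀ ≠ 0)
    (N : ℝ) : ∃ lam : ℝ, ∃ p ∈ subdiff β (lam • h₀), N ≤ ‖p‖ := by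
  obtain ⟨R, hR⟩ := hsuper (N + 1)
  set r := max (max R 1) (β 0)
  have hr : 0 < r := zero_lt_one.trans_le ((le_max_right _ _).trans (le_max_left _ _))
  set x := (r * ‖h₀‖⁻¹) • h₀
  have hx : ‖x‖ = r := by
    rw [norm_smul, Real.norm_of_nonneg (by positivity), mul_assoc,
      inv_mul_cancel₀ (norm_ne_zero_iff.mpr hh₀), mul_one]
  obtain ⟨p, hp⟩ := nonempty_subdiff hβ x
  refine ⟨_, p, hp, le_of_mul_le_mul_right ?_ hr⟩
  have hgrowth : (N + 1) * r ≤ β x :=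
    hx ▸ hR x (hx ▸ (le_max_left _ _).trans (le_max_left _ _))
  have hsupport : β x - β 0 ≤ ‖p‖ * r := by
    have := hp 0
    rw [zero_sub, inner_neg_right] at this
    linarith [hx ▸ real_inner_le_norm p x]
  linarith [le_max_right (max R 1) (β 0)]

end Subdifferential

theorem norm_sub_le_of_isLUB_conjugate {E : Type*} [NormedAddCommGroup E] [InnerProductSpace ℝ E]
    {β : E → ℝ} {M a : ℝ} (hM : ∀ u : E, ‖u‖ ≤ 1 → β u ≤ M) {p : E}
    (ha : IsLUB {r | ∃ h : E, r = ⟪p, h⟫ - β h} a) : ‖p‖ - M ≤ a := by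
  have := ha.1 ⟨‖p‖⁻¹ • p, rfl⟩
  rw [real_inner_inv_norm_smul_self] at this
  linarith [hM _ (norm_inv_norm_smul_self_le_one p)]

/-- Let `β : ℝ² → ℝ` be convex and superlinear, `α = β*` its Fenchel conjugate, and fix
a nonzero vector `h₀`. Then the set `S(h₀) = ⋃_{λ∈ℝ} ∂β(λh₀)` of all subgradients at
points of the line `ℝh₀` is an unbounded connected subset of `ℝ²`, and the restriction
of `α` to `S(h₀)` is unbounded above. -/
theorem subgradients_on_line_unbounded_connected
    (β : V2 → ℝ)
    (hconv : ConvexOn ℝ Set.univ β)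
    (hsuper : ∀ C : ℝ, ∃ R : ℝ, ∀ h : V2, R ≤ ‖h‖ → C * ‖h‖ ≤ β h)
    (α : V2 → ℝ)
    (hα : ∀ p : V2, IsLUB {r : ℝ | ∃ h : V2, r = ⟪p, h⟫ - β h} (α p))
    (h₀ : V2) (hh₀ : h₀ ≠ 0) :
    ¬ Bornology.IsBounded (⋃ lam : ℝ, subdiff β (lam • h₀)) ∧
    IsConnected (⋃ lam : ℝ, subdiff β (lam • h₀)) ∧
    ¬ BddAbove (α '' (⋃ lam : ℝ, subdiff β (lam • h₀))) := by
  set S := ⋃ lam : ℝ, subdiff β (lam • h₀)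
  have hlarge (N : ℝ) : ∃ p ∈ S, N ≤ ‖p‖ := by
    obtain ⟨lam, p, hp, hN⟩ := exists_mem_subdiff_smul_le_norm hconv hsuper hh₀ N
    exact ⟨p, mem_iUnion_of_mem lam hp, hN⟩
  obtain ⟨M, hM⟩ := (isCompact_closedBall (0 : V2) 1).exists_bound_of_continuousOn
    hconv.continuous_of_univ.continuousOn
  have hβM (u : V2) (hu : ‖u‖ ≤ 1) : β u ≤ M :=
    (le_abs_self _).trans (hM u (mem_closedBall_zero_iff.mpr hu))
  refine ⟨fun hS => ?_, ?_, fun ⟨B, hB⟩ => ?_⟩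
  · obtain ⟨C, hC⟩ := hS.exists_norm_le
    obtain ⟨p, hpS, hp⟩ := hlarge (C + 1)
    linarith [hC p hpS]
  · exact isConnected_iUnion_of_upperHemicontinuous
      ((upperHemicontinuous_subdiff hconv).comp (continuous_id.smul continuous_const))
      (fun _ => nonempty_subdiff hconv _) (fun _ => (convex_subdiff β _).isPreconnected)
  · obtain ⟨p, hpS, hp⟩ := hlarge (B + M + 1)
    linarith [hB (mem_image_of_mem α hpS), norm_sub_le_of_isLUB_conjugate hβM (hα p)]
end
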